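/- arXiv:1305.6945 — 6 statements merged into one kernel-verified Lean document; each statement's English description precedes it below -/
import Mathlib

section
/- For the graph T'_k(∞), liminf_{n→∞} e(G_n)/n² ≥ (1/4)(1 - 1/k), where G_n is the induced subgraph on {1,...,n}. -/
open scoped Classical

/-- The residue of `m` modulo `k`, taken in `{1, ..., k}`. -/
def res (k m : ℕ) : ℕ := if m % k = 0 then k else m % k

/-- The graph `T'_k(∞)` on `ℕ`: `s` is adjacent to `t` iff `s < t` and the residue of `s`
mod `k` (taken in `{1,...,k}`) is strictly less than that of `t`. -/
def Tk' (k : ℕ) : SimpleGraph ℕ where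
  Adj s t := (s < t ∧ res k s < res k t) ∨ (t < s ∧ res k t < res k s)
  symm := by constructor; intro s t h; tauto
  loopless := by constructor; intro s h; rcases h with ⟨h, -⟩ | ⟨h, -⟩ <;> exact lt_irrefl s h

/-- Number of edges of `G` inside a finite set `s` of vertices (unordered pairs). -/
noncomputable def edgesIn (G : SimpleGraph ℕ) (s : Finset ℕ) : ℕ :=
  ((s ×ˢ s).filter fun p => p.1 < p.2 ∧ G.Adj p.1 p.2).card

/-- `e(G_n)`: number of edges of the subgraph of `G` induced by `{1, ..., n}`. -/
noncomputable def eG (G : SimpleGraph ℕ) (n : ℕ) : ℕ := edgesIn G (Finset.Icc 1 n)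

/-! Cut `{1, …, n}` into `⌊n/k⌋` blocks of `k` consecutive integers; each block contains every
residue once. For residues `a < b` and blocks `i ≤ j`, the vertex of residue `a` in block `i` is
adjacent to the vertex of residue `b` in block `j`, so `e(G_n) ≥ C(k,2) · C(⌊n/k⌋ + 1, 2)`, which is
`(1 - 1/k) n² / 4 - O(n)`. -/

open Finset Filter Topology

lemma le_liminf_of_tendsto_of_eventually_le {β α : Type*} [ConditionallyCompleteLinearOrder α]
    [TopologicalSpace α] [OrderTopology α] {f : Filter β} [f.NeBot] {u v : β → α} {a : α}
    (hv : Tendsto v f (𝓝 a)) (hvu : ∀ᶠ x in f, v x ≤ u x) (hu : f.IsCoboundedUnder (· ≥ ·) u) :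
    a ≤ liminf u f :=
  hv.liminf_eq ▸ liminf_le_liminf hvu hv.isBoundedUnder_ge hu

lemma edgesIn_le_sq (G : SimpleGraph ℕ) (s : Finset ℕ) : edgesIn G s ≤ #s ^ 2 :=
  (card_filter_le _ _).trans (by rw [card_product, sq])

lemma eG_div_sq_le_one (G : SimpleGraph ℕ) (n : ℕ) : (eG G n : ℝ) / (n : ℝ) ^ 2 ≤ 1 := by
  refine div_le_one_of_le₀ ?_ (by positivity)
  exact_mod_cast (edgesIn_le_sq G (Icc 1 n)).trans_eq (by rw [Nat.card_Icc, Nat.add_sub_cancel])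

lemma res_mul_add_succ (k i : ℕ) {a : ℕ} (ha : a < k) : res k (k * i + a + 1) = a + 1 := by
  unfold res
  rcases (show a + 1 ≤ k from ha).eq_or_lt with h | h
  · rw [add_assoc, h, ← Nat.mul_succ, Nat.mul_mod_right, if_pos rfl]
  · rw [add_assoc, Nat.mul_add_mod, Nat.mod_eq_of_lt h, if_neg (Nat.succ_ne_zero a)]

lemma eq_and_eq_of_mul_add_eq_mul_add {k i j a b : ℕ} (ha : a < k) (hb : b < k)
    (h : k * i + a = k * j + b) : i = j ∧ a = b := by
  have hk : 0 < k := by omega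
  have split : ∀ i a, a < k → (k * i + a) / k = i ∧ (k * i + a) % k = a :=
    fun i a ha => (Nat.div_mod_unique hk).2 ⟨by ring, ha⟩
  obtain ⟨hi, ha⟩ := split i a ha
  obtain ⟨hj, hb⟩ := split j b hb
  rw [h] at hi ha
  exact ⟨hi.symm.trans hj, ha.symm.trans hb⟩

lemma choose_two_mul_choose_two_le_eG (k n : ℕ) :
    k.choose 2 * (n / k + 1).choose 2 ≤ eG (Tk' k) n := by
  set q := n / k
  calc k.choose 2 * (q + 1).choose 2
      = #({x ∈ range k ×ˢ range k | x.1 < x.2} ×ˢ {x ∈ range (q + 1) ×ˢ range (q + 1) | x.1 < x.2})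
        := by rw [card_product, card_product_filter_lt, card_product_filter_lt, card_range, card_range]
    _ ≤ eG (Tk' k) n := ?_
  -- `i < j ≤ n / k` encodes the pair of blocks `i ≤ j - 1 < n / k`
  refine card_le_card_of_injOn (fun x => (k * x.2.1 + x.1.1 + 1, k * (x.2.2 - 1) + x.1.2 + 1))
    ?_ ?_
  · rintro ⟨⟨a, b⟩, i, j⟩ hx
    simp only [mem_coe, mem_product, mem_filter, mem_range] at hx
    obtain ⟨⟨⟨ha, hb⟩, hab⟩, ⟨hi, hj⟩, hij⟩ := hx
    have hblock : k * i ≤ k * (j - 1) := Nat.mul_le_mul_left k (by omega)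
    have hlast : k * (j - 1) + k ≤ n :=
      calc k * (j - 1) + k = k * (j - 1 + 1) := (Nat.mul_succ k _).symm
        _ ≤ k * q := Nat.mul_le_mul_left k (by omega)
        _ ≤ n := Nat.mul_div_le n k
    have hlt : k * i + a + 1 < k * (j - 1) + b + 1 := by omega
    simp only [mem_coe, mem_filter, mem_product, mem_Icc]
    refine ⟨⟨⟨by omega, by omega⟩, by omega, by omega⟩, hlt, Or.inl ⟨hlt, ?_⟩⟩
    rwa [res_mul_add_succ k i (by omega), res_mul_add_succ k (j - 1) hb, Nat.add_lt_add_iff_right]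
  · rintro ⟨⟨a, b⟩, i, j⟩ hx ⟨⟨a', b'⟩, i', j'⟩ hx' h
    simp only [mem_coe, mem_product, mem_filter, mem_range] at hx hx'
    simp only [Prod.mk.injEq, Nat.add_right_cancel_iff] at h
    obtain ⟨rfl, rfl⟩ := eq_and_eq_of_mul_add_eq_mul_add hx.1.1.1 hx'.1.1.1 h.1
    obtain ⟨hj, rfl⟩ := eq_and_eq_of_mul_add_eq_mul_add hx.1.1.2 hx'.1.1.2 h.2
    obtain rfl : j = j' := by omega
    rfl

lemma quarter_mul_le_eG_div_sq {k n : ℕ} (hk : 1 ≤ k) (hkn : k ≤ n) :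
    1 / 4 * (1 - 1 / (k : ℝ)) * (1 - k / n) ≤ (eG (Tk' k) n : ℝ) / (n : ℝ) ^ 2 := by
  set q := n / k
  have hcount : (k : ℝ) * (k - 1) / 2 * ((q + 1) * q / 2) ≤ eG (Tk' k) n := by
    have h := choose_two_mul_choose_two_le_eG k n
    rw [← Nat.cast_le (α := ℝ), Nat.cast_mul, Nat.cast_choose_two, Nat.cast_choose_two] at h
    simpa using h
  have hq_succ : (n : ℝ) ≤ k * (q + 1) := by exact_mod_cast (Nat.lt_mul_div_succ n hk).le
  have hq : (n : ℝ) - k ≤ k * q := by linarith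
  have hn0 : (0 : ℝ) < n := by exact_mod_cast hk.trans hkn
  have hkn' : (k : ℝ) ≤ n := by exact_mod_cast hkn
  have hk1 : (1 : ℝ) ≤ k := by exact_mod_cast hk
  have hblocks : (n : ℝ) * (n - k) ≤ k * (q + 1) * (k * q) :=
    mul_le_mul hq_succ hq (by linarith) (by positivity)
  rw [le_div_iff₀ (by positivity)]
  field_simp
  nlinarith [mul_le_mul_of_nonneg_left hblocks (by linarith : (0 : ℝ) ≤ k - 1)]

theorem statement_2 (k : ℕ) (hk : 2 ≤ k) :
    (1 / 4 : ℝ) * (1 - 1 / (k : ℝ)) ≤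
      Filter.liminf (fun n => (eG (Tk' k) n : ℝ) / (n : ℝ) ^ 2) Filter.atTop := by
  have hlim : Tendsto (fun n : ℕ => 1 / 4 * (1 - 1 / (k : ℝ)) * (1 - k / n)) atTop
      (𝓝 (1 / 4 * (1 - 1 / (k : ℝ)))) := by
    simpa using ((tendsto_const_div_atTop_nhds_zero_nat (k : ℝ)).const_sub 1).const_mul
      (1 / 4 * (1 - 1 / (k : ℝ)))
  refine le_liminf_of_tendsto_of_eventually_le hlim ?_
    (isCoboundedUnder_ge_of_le atTop (x := 1) (eG_div_sq_le_one _))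
  filter_upwards [eventually_ge_atTop k] with n hn
  exact quarter_mul_le_eG_div_sq (by omega) hn
end

section
/- Any n-vertex K_{2,t+1}-free graph has at most (1/2)(1 + √(4t(n-1)+1))·n/2 edges; in particular e(G) ≤ 2√t · n^{3/2} for all n ≥ 1. -/
/-- `G` contains a copy of `F` (as a subgraph). -/
def Contains {V W : Type*} (F : SimpleGraph V) (G : SimpleGraph W) : Prop :=
  ∃ f : F →g G, Function.Injective f

/-- `G` is `F`-free. -/
def FFree {V W : Type*} (F : SimpleGraph V) (G : SimpleGraph W) : Prop := ¬ Contains F G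

/-!
Two distinct vertices have at most `t` common neighbours, so counting the pairs `(x, y)` of
distinct neighbours of each vertex gives `∑ d(v)² - 2e ≤ t n (n - 1)`. Together with
Cauchy–Schwarz, `(2e)² ≤ n ∑ d(v)²`, this is the quadratic inequality
`(2e)² ≤ n (2e) + t n² (n - 1)` in `2e`, whose larger root is the first bound;
`√(4t(n - 1) + 1) ≤ 2√(tn)` then gives the second.
-/

open Finset

theorem contains_iff_isContained {V W : Type*} {F : SimpleGraph V} {G : SimpleGraph W} :
    Contains F G ↔ F.IsContained G :=
  ⟨fun ⟨f, hf⟩ => ⟨⟨f, hf⟩⟩, fun ⟨c⟩ => ⟨c.toHom, c.injective'⟩⟩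

theorem two_mul_le_add_sqrt_of_sq_le {x b c : ℝ} (h : x ^ 2 ≤ b * x + c) :
    2 * x ≤ b + √(b ^ 2 + 4 * c) := by
  have := Real.abs_le_sqrt (x := 2 * x - b) (y := b ^ 2 + 4 * c) (by nlinarith)
  linarith [le_abs_self (2 * x - b)]

namespace SimpleGraph

variable {V : Type*} [Fintype V] {G : SimpleGraph V} [DecidableRel G.Adj]

theorem sq_two_mul_card_edgeFinset_le :
    (2 * #G.edgeFinset : ℝ) ^ 2 ≤ Fintype.card V * ∑ v, (G.degree v : ℝ) ^ 2 := by
  have hdeg : ∑ v, (G.degree v : ℝ) = 2 * #G.edgeFinset := by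
    exact_mod_cast G.sum_degrees_eq_twice_card_edges
  simpa [hdeg] using sq_sum_le_card_mul_sum_sq (s := univ) (f := fun v => (G.degree v : ℝ))

variable [DecidableEq V]

theorem card_inter_neighborFinset_le_of_fFree {t : ℕ}
    (hfree : FFree (completeBipartiteGraph (Fin 2) (Fin (t + 1))) G) {x y : V} (hxy : x ≠ y) :
    #(G.neighborFinset x ∩ G.neighborFinset y) ≤ t := by
  by_contra! hcard
  obtain ⟨right, hright, hcard_right⟩ := exists_subset_card_eq (Nat.succ_le_of_lt hcard)
  refine hfree (contains_iff_isContained.mpr (completeBipartiteGraph_isContained_iff.mpr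
    ⟨{x, y}, right, by simpa using card_pair hxy, by simpa using hcard_right, ?_⟩))
  intro u hu v hv
  have hv' := mem_inter.mp (hright hv)
  rcases mem_insert.mp hu with rfl | hu
  · exact (mem_neighborFinset _ _ _).mp hv'.1
  · rw [mem_singleton.mp hu]; exact (mem_neighborFinset _ _ _).mp hv'.2

theorem sum_card_offDiag_neighborFinset :
    ∑ v, #(G.neighborFinset v).offDiag =
      ∑ p ∈ (univ : Finset V).offDiag, #(G.neighborFinset p.1 ∩ G.neighborFinset p.2) := by
  convert sum_card_bipartiteAbove_eq_sum_card_bipartiteBelow (s := univ) (t := univ.offDiag)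
    (r := fun v (p : V × V) => p ∈ (G.neighborFinset v).offDiag) using 3 with v _ p hp
  · ext p; simp [bipartiteAbove]
  · ext v; simp [bipartiteBelow, adj_comm, (mem_offDiag.mp hp).2.2]

theorem sum_degree_sq_le {t : ℕ}
    (hcodeg : ∀ x y : V, x ≠ y → #(G.neighborFinset x ∩ G.neighborFinset y) ≤ t) :
    ∑ v, (G.degree v : ℝ) ^ 2 ≤
      2 * #G.edgeFinset + t * Fintype.card V * (Fintype.card V - 1) := by
  have hcount : ∑ v, #(G.neighborFinset v).offDiag ≤ #(univ : Finset V).offDiag * t := by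
    rw [sum_card_offDiag_neighborFinset]
    exact sum_le_card_nsmul _ _ _ fun p hp => hcodeg _ _ (mem_offDiag.mp hp).2.2
  have hcast (s : Finset V) : (#s.offDiag : ℝ) = #s ^ 2 - #s := by
    rw [offDiag_card, Nat.cast_sub (Nat.le_mul_self _)]; push_cast; ring
  have hcountR := (Nat.cast_le (α := ℝ)).mpr hcount
  push_cast only [Nat.cast_sum, Nat.cast_mul] at hcountR
  simp only [hcast, card_neighborFinset_eq_degree, card_univ, sum_sub_distrib] at hcountR
  have hdeg : ∑ v, (G.degree v : ℝ) = 2 * #G.edgeFinset := by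
    exact_mod_cast G.sum_degrees_eq_twice_card_edges
  linarith

theorem card_edgeFinset_le_of_card_inter_neighborFinset_le {t : ℕ}
    (hcodeg : ∀ x y : V, x ≠ y → #(G.neighborFinset x ∩ G.neighborFinset y) ≤ t) :
    (#G.edgeFinset : ℝ) ≤
      (1 / 2) * (1 + √(4 * t * ((Fintype.card V : ℝ) - 1) + 1)) * Fintype.card V / 2 := by
  set n : ℝ := (Fintype.card V : ℝ)
  set e : ℝ := (#G.edgeFinset : ℝ)
  have hn : 0 ≤ n := Nat.cast_nonneg _
  have hquad : (2 * e) ^ 2 ≤ n * (2 * e) + t * n ^ 2 * (n - 1) := by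
    nlinarith [sq_two_mul_card_edgeFinset_le (G := G),
      mul_le_mul_of_nonneg_left (sum_degree_sq_le hcodeg) hn]
  have hroot := two_mul_le_add_sqrt_of_sq_le hquad
  rw [show n ^ 2 + 4 * (t * n ^ 2 * (n - 1)) = n ^ 2 * (4 * t * (n - 1) + 1) by ring,
    Real.sqrt_mul (sq_nonneg n), Real.sqrt_sq hn] at hroot
  linarith

end SimpleGraph

theorem one_add_sqrt_mul_div_four_le_rpow {t : ℝ} (ht : 1 ≤ t) (n : ℕ) :
    (1 / 2) * (1 + √(4 * t * ((n : ℝ) - 1) + 1)) * n / 2 ≤ 2 * √t * (n : ℝ) ^ ((3 : ℝ) / 2) := by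
  have hsqrt : √(4 * t * ((n : ℝ) - 1) + 1) ≤ 2 * √t * √n := by
    calc √(4 * t * ((n : ℝ) - 1) + 1) ≤ √(2 ^ 2 * t * n) := Real.sqrt_le_sqrt (by nlinarith)
      _ = 2 * √t * √n := by simp [Real.sqrt_mul, Real.sqrt_mul']
  have hn : (n : ℝ) ≤ n * √n := by
    rcases n.eq_zero_or_pos with rfl | hpos
    · simp
    · exact le_mul_of_one_le_right (Nat.cast_nonneg n)
        (Real.one_le_sqrt.mpr (by exact_mod_cast hpos))
  have hpow : (n : ℝ) ^ ((3 : ℝ) / 2) = n * √n := by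
    rw [Real.sqrt_eq_rpow, show (3 : ℝ) / 2 = 1 + 1 / 2 by norm_num,
      Real.rpow_add' (Nat.cast_nonneg n) (by norm_num), Real.rpow_one]
  have hsqrt_t : 1 ≤ √t := Real.one_le_sqrt.mpr ht
  rw [hpow]
  nlinarith [mul_le_mul_of_nonneg_left hsqrt (Nat.cast_nonneg n),
    mul_nonneg (Nat.cast_nonneg n) (Real.sqrt_nonneg n), Real.sqrt_nonneg t]

theorem statement_5_general (t n : ℕ) (ht : 1 ≤ t) (G : SimpleGraph (Fin n))
    (hfree : FFree (completeBipartiteGraph (Fin 2) (Fin (t + 1))) G) :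
    (Nat.card G.edgeSet : ℝ) ≤ (1 / 2) * (1 + Real.sqrt (4 * t * ((n : ℝ) - 1) + 1)) * n / 2 ∧
    (Nat.card G.edgeSet : ℝ) ≤ 2 * Real.sqrt t * (n : ℝ) ^ ((3 : ℝ) / 2) := by
  classical
  have hedges : (Nat.card G.edgeSet : ℝ) ≤
      (1 / 2) * (1 + Real.sqrt (4 * t * ((n : ℝ) - 1) + 1)) * n / 2 := by
    simpa [Nat.card_eq_fintype_card, SimpleGraph.edgeFinset_card] using
      G.card_edgeFinset_le_of_card_inter_neighborFinset_le
        fun _ _ => G.card_inter_neighborFinset_le_of_fFree hfree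
  exact ⟨hedges, hedges.trans (one_add_sqrt_mul_div_four_le_rpow (by exact_mod_cast ht) n)⟩

/-- Kővári–Sós–Turán bound for `K_{2,t+1}`: an `n`-vertex `K_{2,t+1}`-free graph has at most
`(1/2)(1 + √(4t(n-1)+1))·n/2` edges, and in particular at most `2√t·n^{3/2}` edges. -/
theorem statement_5 (t n : ℕ) (ht : 1 ≤ t) (hn : 1 ≤ n) (G : SimpleGraph (Fin n))
    (hfree : FFree (completeBipartiteGraph (Fin 2) (Fin (t + 1))) G) :
    (Nat.card G.edgeSet : ℝ) ≤ (1 / 2) * (1 + Real.sqrt (4 * t * ((n : ℝ) - 1) + 1)) * n / 2 ∧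
    (Nat.card G.edgeSet : ℝ) ≤ 2 * Real.sqrt t * (n : ℝ) ^ ((3 : ℝ) / 2) :=
  statement_5_general t n ht G hfree
end

section
/- Let t ≥ 1 and δ > 0 be reals. There do not exist nonnegative reals a₁, a₂, b with a₁ ≥ α, a₁ + a₂ + b ≥ α√8, t + δ ≥ 4a₁² + b², and t + δ ≥ 4a₂² + b², provided α(1+√8) > 13√((t+δ)/52). -/
/-!
Adding `α ≤ a₁` to `α √8 ≤ a₁ + a₂ + b` gives `α (1 + √8) ≤ 2 a₁ + a₂ + b`. Averaging the two
constraints with weights `2/3, 1/3` gives `(8/3) a₁² + (4/3) a₂² + b² ≤ s`, and Cauchy–Schwarz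
then bounds `2 a₁ + a₂ + b` by `√((3/2 + 3/4 + 1) s) = √(13 s / 4) = 13 √(s / 52)`.
-/

lemma sq_two_mul_add_add_le {a₁ a₂ b s : ℝ} (h₁ : 4 * a₁ ^ 2 + b ^ 2 ≤ s)
    (h₂ : 4 * a₂ ^ 2 + b ^ 2 ≤ s) : (2 * a₁ + a₂ + b) ^ 2 ≤ 13 * s / 4 := by
  nlinarith [sq_nonneg (4 * a₁ - 3 * b), sq_nonneg (4 * a₂ - 3 * b), sq_nonneg (a₁ - a₂)]

lemma thirteen_mul_sqrt_div_fiftyTwo (s : ℝ) : 13 * √(s / 52) = √(13 * s / 4) := by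
  rw [show 13 * s / 4 = 13 ^ 2 * (s / 52) by ring, Real.sqrt_mul (by norm_num),
    Real.sqrt_sq (by norm_num)]

lemma two_mul_add_add_le_thirteen_mul_sqrt {a₁ a₂ b s : ℝ} (h₁ : 4 * a₁ ^ 2 + b ^ 2 ≤ s)
    (h₂ : 4 * a₂ ^ 2 + b ^ 2 ≤ s) : 2 * a₁ + a₂ + b ≤ 13 * √(s / 52) :=
  thirteen_mul_sqrt_div_fiftyTwo s ▸ Real.le_sqrt_of_sq_le (sq_two_mul_add_add_le h₁ h₂)

theorem statement_6_general (t δ α : ℝ)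
    (hα : 13 * Real.sqrt ((t + δ) / 52) < α * (1 + Real.sqrt 8)) :
    ¬ ∃ a₁ a₂ b : ℝ, 0 ≤ a₁ ∧ 0 ≤ a₂ ∧ 0 ≤ b ∧
      α ≤ a₁ ∧ α * Real.sqrt 8 ≤ a₁ + a₂ + b ∧
      4 * a₁ ^ 2 + b ^ 2 ≤ t + δ ∧ 4 * a₂ ^ 2 + b ^ 2 ≤ t + δ := by
  rintro ⟨a₁, a₂, b, -, -, -, hα₁, hα₈, h₁, h₂⟩
  have hupper := two_mul_add_add_le_thirteen_mul_sqrt h₁ h₂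
  linarith [mul_add α 1 (Real.sqrt 8)]

theorem statement_6 (t δ α : ℝ) (ht : 1 ≤ t) (hδ : 0 < δ)
    (hα : 13 * Real.sqrt ((t + δ) / 52) < α * (1 + Real.sqrt 8)) :
    ¬ ∃ a₁ a₂ b : ℝ, 0 ≤ a₁ ∧ 0 ≤ a₂ ∧ 0 ≤ b ∧
      α ≤ a₁ ∧ α * Real.sqrt 8 ≤ a₁ + a₂ + b ∧
      4 * a₁ ^ 2 + b ^ 2 ≤ t + δ ∧ 4 * a₂ ^ 2 + b ^ 2 ≤ t + δ :=
  statement_6_general t δ α hα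
end

section
/- The maximum of f(x,y,z) = 2x + y + z over nonnegative reals x, y, z subject to 4x² + z² ≤ s and 4y² + z² ≤ s equals 13·√(s/52), for any s > 0. -/
/-!
Write `s = 52 t²`. The point `(3t, 3t, 4t)` is feasible and gives `13 t`. For the upper bound,
adding twice the first constraint to the second gives `8x² + 4y² + 3z² ≤ 156 t²`, and completing
squares around `(3t, 3t, 4t)` turns this into `24 t (2x + y + z) ≤ 312 t²`.
-/

theorem two_mul_add_add_le_of_constraints {t x y z : ℝ} (ht : 0 < t)
    (hxz : 4 * x ^ 2 + z ^ 2 ≤ 52 * t ^ 2) (hyz : 4 * y ^ 2 + z ^ 2 ≤ 52 * t ^ 2) :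
    2 * x + y + z ≤ 13 * t := by
  have hsq : 0 ≤ 8 * (x - 3 * t) ^ 2 + 4 * (y - 3 * t) ^ 2 + 3 * (z - 4 * t) ^ 2 := by positivity
  have hsq_eq : 8 * (x - 3 * t) ^ 2 + 4 * (y - 3 * t) ^ 2 + 3 * (z - 4 * t) ^ 2 =
      2 * (4 * x ^ 2 + z ^ 2) + (4 * y ^ 2 + z ^ 2) + 156 * t ^ 2 - 24 * t * (2 * x + y + z) := by
    ring
  have hmul : t * (2 * x + y + z) ≤ t * (13 * t) := by linarith
  exact le_of_mul_le_mul_left hmul ht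

theorem statement_7 (s : ℝ) (hs : 0 < s) :
    IsGreatest {v : ℝ | ∃ x y z : ℝ, 0 ≤ x ∧ 0 ≤ y ∧ 0 ≤ z ∧
        4 * x ^ 2 + z ^ 2 ≤ s ∧ 4 * y ^ 2 + z ^ 2 ≤ s ∧ v = 2 * x + y + z}
      (13 * Real.sqrt (s / 52)) := by
  set t := Real.sqrt (s / 52)
  have ht : 0 < t := Real.sqrt_pos.mpr (by positivity)
  have hst : s = 52 * t ^ 2 := by
    rw [Real.sq_sqrt (by positivity)]
    ring
  clear_value t
  subst hst
  constructor
  · exact ⟨3 * t, 3 * t, 4 * t, by positivity, by positivity, by positivity,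
      by linarith, by linarith, by ring⟩
  · rintro v ⟨x, y, z, -, -, -, hxz, hyz, rfl⟩
    exact two_mul_add_add_le_of_constraints ht hxz hyz
end

section
/- Let G be a q-regular graph on N vertices (loops allowed, each loop contributing 1 to degree) whose adjacency matrix A satisfies: A² has diagonal blocks qI and off-diagonal blocks the all-t matrix, relative to a partition of the vertices into q+1 classes of size (q−1)/t each. Then the eigenvalues of A are q (with multiplicity 1) and otherwise lie in {√q, −√q, 1, −1}. -/
/-- Sign propagation along an edge for an eigenvector of `±q` of a `q`-regular
`(0,1)`-matrix, at a vertex of maximal absolute value. -/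
lemma furedi_step {n : Type*} [Fintype n] (A : Matrix n n ℝ)
    (q : ℝ) (h01 : ∀ i j, A i j = 0 ∨ A i j = 1)
    (hreg : ∀ i, ∑ j, A i j = q)
    (v : n → ℝ) (ε : ℝ) (hε : ε = 1 ∨ ε = -1)
    (hv : A.mulVec v = (ε * q) • v)
    (i : n) (hi : ∀ k, |v k| ≤ |v i|) (j : n) (hij : A i j = 1) :
    v j = ε * v i := by
  have hvi : ∑ k, A i k * v k = (ε * q) * v i := by
    have := congrFun hv i
    simpa [Matrix.mulVec, dotProduct] using this
  set c := ε * v i with hc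
  have habs : |c| = |v i| := by rcases hε with h | h <;> simp [hc, h, abs_mul]
  have hsum : ∑ k, A i k * (c - v k) = 0 := by
    have h1 : ∑ k, A i k * (c - v k) = (∑ k, A i k) * c - ∑ k, A i k * v k := by
      rw [Finset.sum_mul, ← Finset.sum_sub_distrib]
      exact Finset.sum_congr rfl fun k _ => by ring
    rw [h1, hreg, hvi]; ring
  have hA01 : ∀ k, 0 ≤ A i k := fun k => by rcases h01 i k with h | h <;> simp [h]
  have hzero : A i j * (c - v j) = 0 := by
    rcases le_or_gt 0 c with hc0 | hc0
    · have hnn : ∀ k ∈ Finset.univ (α := n), 0 ≤ A i k * (c - v k) := by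
        intro k _
        have hk : v k ≤ c := by
          have := le_trans (le_abs_self (v k)) (hi k)
          rw [← habs, abs_of_nonneg hc0] at this
          exact this
        exact mul_nonneg (hA01 k) (by linarith)
      exact (Finset.sum_eq_zero_iff_of_nonneg hnn).mp hsum j (Finset.mem_univ j)
    · have hnp : ∀ k ∈ Finset.univ (α := n), A i k * (c - v k) ≤ 0 := by
        intro k _
        have hk : c ≤ v k := by
          have h2 : -|v i| ≤ v k := le_trans (neg_le_neg (hi k)) (neg_abs_le (v k))
          rw [← habs, abs_of_neg hc0] at h2
          linarith
        exact mul_nonpos_of_nonneg_of_nonpos (hA01 k) (by linarith)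
      exact (Finset.sum_eq_zero_iff_of_nonpos hnp).mp hsum j (Finset.mem_univ j)
  rw [hij, one_mul] at hzero
  linarith [sub_eq_zero.mp hzero]

/-- In a connected `q`-regular graph, an eigenvector of `±q` has constant absolute value. -/
lemma furedi_allmax {n : Type*} [Fintype n] (A : Matrix n n ℝ)
    (q : ℝ) (h01 : ∀ i j, A i j = 0 ∨ A i j = 1)
    (hreg : ∀ i, ∑ j, A i j = q)
    (hconn : ∀ i j, Relation.ReflTransGen (fun a b => A a b = 1) i j)
    (v : n → ℝ) (ε : ℝ) (hε : ε = 1 ∨ ε = -1)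
    (hv : A.mulVec v = (ε * q) • v)
    (i₀ : n) (hi₀ : ∀ k, |v k| ≤ |v i₀|) :
    ∀ j, |v j| = |v i₀| := by
  intro j
  induction hconn i₀ j with
  | refl => rfl
  | tail hab hbc ih =>
    rename_i b c
    have hb : ∀ k, |v k| ≤ |v b| := fun k => ih ▸ hi₀ k
    have := furedi_step A q h01 hreg v ε hε hv b hb c hbc
    rw [this, abs_mul]
    rcases hε with h | h <;> simp [h, ih]

/-- In a connected `q`-regular graph, an eigenvector of `q` is constant. -/
lemma furedi_const {n : Type*} [Fintype n] (A : Matrix n n ℝ)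
    (q : ℝ) (h01 : ∀ i j, A i j = 0 ∨ A i j = 1)
    (hreg : ∀ i, ∑ j, A i j = q)
    (hconn : ∀ i j, Relation.ReflTransGen (fun a b => A a b = 1) i j)
    (v : n → ℝ) (hv : A.mulVec v = q • v)
    (i₀ : n) (hi₀ : ∀ k, |v k| ≤ |v i₀|) :
    ∀ j, v j = v i₀ := by
  have hv' : A.mulVec v = ((1:ℝ) * q) • v := by rw [one_mul]; exact hv
  intro j
  induction hconn i₀ j with
  | refl => rfl
  | tail hab hbc ih =>
    rename_i b c
    have hb : ∀ k, |v k| ≤ |v b| := fun k => by rw [ih]; exact hi₀ k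
    have := furedi_step A q h01 hreg v 1 (Or.inl rfl) hv' b hb c hbc
    rw [this, one_mul, ih]

/-- In a connected `q`-regular graph, a nonzero eigenvector of `-q` yields a bipartition. -/
lemma furedi_bip {n : Type*} [Fintype n] [Nonempty n] (A : Matrix n n ℝ)
    (q : ℝ) (h01 : ∀ i j, A i j = 0 ∨ A i j = 1)
    (hreg : ∀ i, ∑ j, A i j = q)
    (hconn : ∀ i j, Relation.ReflTransGen (fun a b => A a b = 1) i j)
    (v : n → ℝ) (hv : A.mulVec v = (-q) • v) (hv0 : v ≠ 0) :
    ∃ f : n → Bool, ∀ i j, A i j = 1 → f i ≠ f j := by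
  have hv' : A.mulVec v = ((-1:ℝ) * q) • v := by rw [neg_one_mul]; exact hv
  obtain ⟨i₀, -, hi₀⟩ := Finset.exists_max_image Finset.univ (fun k => |v k|)
    Finset.univ_nonempty
  have hi₀' : ∀ k, |v k| ≤ |v i₀| := fun k => hi₀ k (Finset.mem_univ k)
  have hM : 0 < |v i₀| := by
    by_contra h
    push_neg at h
    apply hv0
    funext k
    have : |v k| ≤ 0 := le_trans (hi₀' k) h
    simpa using abs_nonpos_iff.mp this
  have hall := furedi_allmax A q h01 hreg hconn v (-1) (Or.inr rfl) hv' i₀ hi₀'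
  refine ⟨fun k => decide (0 < v k), fun i j hij => ?_⟩
  have hi : ∀ k, |v k| ≤ |v i| := fun k => (hall i) ▸ hi₀' k
  have hji : v j = -1 * v i := furedi_step A q h01 hreg v (-1) (Or.inr rfl) hv' i hi j hij
  have hvi : v i ≠ 0 := fun h => by rw [← hall i, h] at hM; simp at hM
  intro hEq
  rw [decide_eq_decide] at hEq
  rcases hvi.lt_or_gt with h | h
  · have : 0 < v j := by rw [hji]; linarith
    linarith [hEq.mpr this]
  · have : v j < 0 := by rw [hji]; linarith
    linarith [hEq.mp h, this]

/-- The spectral computation from the block structure of `A²`: any eigenvalue `μ`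
satisfies `μ² ∈ {q, q², 1}`. -/
lemma furedi_sq (q t m : ℕ) (ht : 1 ≤ t) (hq : 2 ≤ q) (htm : t * m + 1 = q)
    (A : Matrix (Fin (q + 1) × Fin m) (Fin (q + 1) × Fin m) ℝ)
    (hA2 : ∀ i j, (A * A) i j =
      if i.1 = j.1 then (if i = j then (q : ℝ) else 0) else (t : ℝ))
    (v : Fin (q + 1) × Fin m → ℝ) (μ : ℝ)
    (hAv : A.mulVec v = μ • v) (hv0 : v ≠ 0) :
    μ * μ = q ∨ μ * μ = (q:ℝ) * q ∨ μ * μ = 1 := by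
  have htmr : (t : ℝ) * m = (q : ℝ) - 1 := by
    have h' : (t:ℝ) * m + 1 = q := by exact_mod_cast htm
    linarith
  set s : Fin (q+1) → ℝ := fun i => ∑ b, v (i, b) with hs
  set S : ℝ := ∑ i, s i with hS
  have h2 : (A * A).mulVec v = (μ * μ) • v := by
    rw [← Matrix.mulVec_mulVec, hAv, Matrix.mulVec_smul, hAv, smul_smul]
  have E : ∀ i a, (q:ℝ) * v (i,a) + (t:ℝ) * (S - s i) = (μ * μ) * v (i,a) := by
    intro i a
    have hpt := congrFun h2 (i, a)
    have hlhs : (A * A).mulVec v (i, a)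
        = ∑ j : Fin (q+1) × Fin m,
          (if i = j.1 then (if (i,a) = j then (q:ℝ) else 0) else (t:ℝ)) * v j := by
      simp only [Matrix.mulVec, dotProduct]
      exact Finset.sum_congr rfl fun j _ => by rw [hA2]
    have hkey : ∀ j : Fin (q+1) × Fin m,
        (if i = j.1 then (if (i,a) = j then (q:ℝ) else 0) else (t:ℝ)) * v j
        = (q:ℝ) * ((if (i,a) = j then (1:ℝ) else 0) * v j) + (t:ℝ) * v j
          - (t:ℝ) * ((if i = j.1 then (1:ℝ) else 0) * v j) := by
      intro j
      by_cases h1 : i = j.1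
      · by_cases h2 : (i,a) = j <;> simp [h1, h2]
      · have h2 : (i,a) ≠ j := fun h => h1 (by rw [← h])
        simp [h1, h2]
    have e1 : ∑ j : Fin (q+1) × Fin m, (if (i,a) = j then (1:ℝ) else 0) * v j = v (i,a) := by
      simp
    have e2 : ∑ j : Fin (q+1) × Fin m, (if i = j.1 then (1:ℝ) else 0) * v j = s i := by
      rw [Fintype.sum_prod_type]
      simp [hs]
    have e3 : ∑ j : Fin (q+1) × Fin m, v j = S := by
      rw [Fintype.sum_prod_type]
    have hfin : (A * A).mulVec v (i, a)
        = (q:ℝ) * v (i,a) + (t:ℝ) * S - (t:ℝ) * s i := by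
      rw [hlhs, Finset.sum_congr rfl fun j _ => hkey j]
      rw [Finset.sum_sub_distrib, Finset.sum_add_distrib, ← Finset.mul_sum,
        ← Finset.mul_sum, ← Finset.mul_sum, e1, e2, e3]
    rw [hfin, Pi.smul_apply, smul_eq_mul] at hpt
    linarith
  set lam : ℝ := μ * μ - q with hlam
  by_cases hl0 : lam = 0
  · left; rw [hlam] at hl0; linarith
  have hEq : ∀ i a, v (i, a) * lam = (t:ℝ) * (S - s i) := by
    intro i a
    rw [hlam]
    linear_combination -E i a
  have Es : ∀ i : Fin (q+1), s i * (lam + (t:ℝ) * m) = (t:ℝ) * m * S := by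
    intro i
    have h1 : s i * lam = ∑ b : Fin m, v (i, b) * lam := by
      rw [← Finset.sum_mul]
    rw [Finset.sum_congr rfl fun b _ => hEq i b, Finset.sum_const,
      Finset.card_univ, Fintype.card_fin, nsmul_eq_mul] at h1
    nlinarith [h1]
  have ES : S * lam = ((q:ℝ) * (q:ℝ) - (q:ℝ)) * S := by
    have hsum := Finset.sum_congr rfl (fun i (_ : i ∈ Finset.univ) => Es i)
    rw [← Finset.sum_mul, ← hS, Finset.sum_const, Finset.card_univ,
      Fintype.card_fin, nsmul_eq_mul] at hsum
    push_cast at hsum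
    rw [htmr] at hsum
    nlinarith [hsum]
  by_cases hSS : S = 0
  · right; right
    by_cases hl1 : lam + (t:ℝ) * m = 0
    · rw [htmr] at hl1; rw [hlam] at hl1; linarith
    · exfalso
      apply hv0
      funext k
      have hsk : s k.1 = 0 := by
        have h := Es k.1
        rw [hSS, mul_zero] at h
        exact (mul_eq_zero.mp h).resolve_right hl1
      have h := hEq k.1 k.2
      rw [hSS, hsk, sub_zero, mul_zero] at h
      have : v (k.1, k.2) = 0 := (mul_eq_zero.mp h).resolve_right hl0
      simpa using this
  · right; left
    have h : lam * S = ((q:ℝ) * (q:ℝ) - (q:ℝ)) * S := by rw [mul_comm]; exact ES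
    have := mul_right_cancel₀ hSS h
    rw [hlam] at this; linarith

/-- Eigenvalues of the Füredi graph `H_{q,t}`: `A` is the (0,1) symmetric adjacency matrix
(loops allowed) of a connected, non-bipartite, `q`-regular graph on `(q+1)` classes of `m`
vertices each (`t·m = q−1`), such that `A²` has diagonal blocks `qI` and off-diagonal blocks
all-`t`.  Then `q` is an eigenvalue of multiplicity 1 and all other eigenvalues lie in
`{√q, −√q, 1, −1}`. -/
theorem statement_9 (q t m : ℕ) (ht : 1 ≤ t) (hq : 2 ≤ q) (htm : t * m + 1 = q)
    (A : Matrix (Fin (q + 1) × Fin m) (Fin (q + 1) × Fin m) ℝ)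
    (hsym : A.IsSymm)
    (h01 : ∀ i j, A i j = 0 ∨ A i j = 1)
    (hreg : ∀ i, ∑ j, A i j = q)
    (hconn : ∀ i j, Relation.ReflTransGen (fun a b => A a b = 1) i j)
    (hnonbip : ¬ ∃ f : (Fin (q + 1) × Fin m) → Bool, ∀ i j, A i j = 1 → f i ≠ f j)
    (hA2 : ∀ i j, (A * A) i j =
      if i.1 = j.1 then (if i = j then (q : ℝ) else 0) else (t : ℝ)) :
    Module.finrank ℝ ↥(Module.End.eigenspace (Matrix.toLin' A) (q : ℝ)) = 1 ∧
    ∀ μ : ℝ, Module.End.HasEigenvalue (Matrix.toLin' A) μ →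
      μ = q ∨ μ = Real.sqrt q ∨ μ = -Real.sqrt q ∨ μ = 1 ∨ μ = -1 := by
  have hm : 0 < m := by
    rcases Nat.eq_zero_or_pos m with h | h
    · subst h; simp at htm; omega
    · exact h
  haveI : Nonempty (Fin m) := ⟨⟨0, hm⟩⟩
  have hq0 : (0:ℝ) < q := by
    have : 0 < q := by omega
    exact_mod_cast this
  constructor
  · -- multiplicity 1: the eigenspace of q is the span of the all-ones vector
    set one : Fin (q + 1) × Fin m → ℝ := fun _ => 1 with hone
    have hone0 : one ≠ 0 := by
      intro h
      have := congrFun h (Classical.arbitrary _)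
      simp [hone] at this
    have honeeig : Matrix.toLin' A one = (q:ℝ) • one := by
      rw [Matrix.toLin'_apply]
      funext i
      simp only [Matrix.mulVec, dotProduct, hone, mul_one, Pi.smul_apply,
        smul_eq_mul]
      exact hreg i
    have hsp : Module.End.eigenspace (Matrix.toLin' A) (q:ℝ)
        = Submodule.span ℝ {one} := by
      apply le_antisymm
      · intro v hv
        rw [Module.End.mem_eigenspace_iff, Matrix.toLin'_apply] at hv
        obtain ⟨i₀, -, hi₀⟩ := Finset.exists_max_image Finset.univ (fun k => |v k|)
          Finset.univ_nonempty
        have hi₀' : ∀ k, |v k| ≤ |v i₀| := fun k => hi₀ k (Finset.mem_univ k)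
        have hconst := furedi_const A (q:ℝ) h01 hreg hconn v hv i₀ hi₀'
        rw [Submodule.mem_span_singleton]
        refine ⟨v i₀, ?_⟩
        funext k
        simp [hone, hconst k]
      · rw [Submodule.span_le, Set.singleton_subset_iff, SetLike.mem_coe,
          Module.End.mem_eigenspace_iff]
        exact honeeig
    rw [hsp]
    exact finrank_span_singleton hone0
  · -- eigenvalue classification
    intro μ hμ
    obtain ⟨v, hv⟩ := hμ.exists_hasEigenvector
    have hv0 : v ≠ 0 := hv.right
    have hAv : A.mulVec v = μ • v := by
      have := hv.apply_eq_smul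
      rwa [Matrix.toLin'_apply] at this
    rcases furedi_sq q t m ht hq htm A hA2 v μ hAv hv0 with h | h | h
    · right
      have habs : |μ| = Real.sqrt q := by
        rw [← Real.sqrt_mul_self_eq_abs, h]
      rcases abs_eq (Real.sqrt_nonneg (q:ℝ)) |>.mp habs with h' | h'
      · exact Or.inl h'
      · exact Or.inr (Or.inl h')
    · rcases mul_self_eq_mul_self_iff.mp h with h' | h'
      · exact Or.inl h'
      · exfalso
        apply hnonbip
        apply furedi_bip A (q:ℝ) h01 hreg hconn v _ hv0
        rw [hAv, h']
    · right; right; right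
      exact mul_self_eq_one_iff.mp h
end

section
/- Let A be a symmetric N×N real matrix, N = (q+1)m, partitioned into (q+1)² blocks of size m×m, such that A² has blocks qI on the diagonal and the all-t matrix off the diagonal, with t·m = q−1. Then the eigenvalues of A² are q² (with multiplicity 1), q, and 1. -/
/-!
For `B = A * A` one has `(B v) i = q v i + t (∑ v - ∑ of v over the block of i)`.
Vectors with zero block sums are therefore eigenvectors for `q`, block-constant vectors with
zero total sum are eigenvectors for `q - t m = 1`, and the constant vector is an eigenvector for
`q + t q m = q²`. For any other eigenvalue the eigenvalue equation forces an eigenvector to be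
constant, so there are no further eigenvalues and the `q²`-eigenspace is the line of constants.
-/

open Finset Module Module.End Matrix

section CommRing

variable {R ι κ : Type*} [CommRing R] [Fintype ι] [Fintype κ] [DecidableEq ι] [DecidableEq κ]

def scalarDiagConstOffDiag (q t : R) : Matrix (ι × κ) (ι × κ) R :=
  fun i j => if i.1 = j.1 then (if i = j then q else 0) else t

variable (q t : R)

theorem scalarDiagConstOffDiag_mulVec_apply (v : ι × κ → R) (i : ι × κ) :
    (scalarDiagConstOffDiag q t *ᵥ v) i = q * v i + t * (∑ j, v j - ∑ k, v (i.1, k)) := by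
  have hentry : ∀ j, scalarDiagConstOffDiag q t i j =
      q * (if i = j then 1 else 0) + t - t * (if i.1 = j.1 then 1 else 0) := by
    intro j
    unfold scalarDiagConstOffDiag
    split_ifs <;> simp_all
  have hblock : ∑ j : ι × κ, (if i.1 = j.1 then v j else 0) = ∑ k, v (i.1, k) := by
    rw [Fintype.sum_prod_type, sum_comm]
    simp
  simp only [mulVec, dotProduct, hentry, add_mul, sub_mul, mul_assoc, sum_add_distrib,
    sum_sub_distrib, ite_mul, one_mul, zero_mul, ← mul_sum, sum_ite_eq, mem_univ, if_true, hblock]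
  ring

theorem scalarDiagConstOffDiag_mulVec_const (c : R) :
    scalarDiagConstOffDiag q t *ᵥ (fun _ : ι × κ => c) =
      (q + t * ((Fintype.card ι - 1) * Fintype.card κ)) • fun _ => c := by
  ext i
  simp only [scalarDiagConstOffDiag_mulVec_apply, sum_const, card_univ, Fintype.card_prod,
    Pi.smul_apply, smul_eq_mul, nsmul_eq_mul]
  push_cast
  ring

theorem scalarDiagConstOffDiag_mulVec_of_blockSum_eq_zero (v : ι × κ → R)
    (hv : ∀ b, ∑ k, v (b, k) = 0) :
    scalarDiagConstOffDiag q t *ᵥ v = q • v := by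
  have htotal : ∑ j, v j = 0 := by
    rw [Fintype.sum_prod_type]
    exact sum_eq_zero fun b _ => hv b
  ext i
  simp [scalarDiagConstOffDiag_mulVec_apply, htotal, hv]

theorem scalarDiagConstOffDiag_mulVec_comp_fst (w : ι → R) (hw : ∑ b, w b = 0) :
    scalarDiagConstOffDiag q t *ᵥ (fun i : ι × κ => w i.1) =
      (q - t * Fintype.card κ) • fun i => w i.1 := by
  have htotal : ∑ j : ι × κ, w j.1 = 0 := by
    rw [Fintype.sum_prod_type]
    simp [← mul_sum, hw]
  ext i
  simp only [scalarDiagConstOffDiag_mulVec_apply, htotal, sum_const, card_univ, nsmul_eq_mul,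
    Pi.smul_apply, smul_eq_mul]
  ring

variable [Nontrivial R]

theorem Pi.single_sub_single_ne_zero {α : Type*} [DecidableEq α] {a b : α} (hab : a ≠ b) :
    (Pi.single a 1 - Pi.single b 1 : α → R) ≠ 0 := fun h => by
  simpa [hab] using congrFun h a

theorem scalarDiagConstOffDiag_hasEigenvalue [Nonempty ι] [Nontrivial κ] :
    HasEigenvalue (toLin' (scalarDiagConstOffDiag (ι := ι) (κ := κ) q t)) q := by
  obtain ⟨k₀, k₁, hk⟩ := exists_pair_ne κ
  let b : ι := Classical.arbitrary ι
  refine hasEigenvalue_of_hasEigenvector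
    (x := Pi.single (b, k₀) 1 - Pi.single (b, k₁) 1)
    ⟨mem_eigenspace_iff.2 ?_, Pi.single_sub_single_ne_zero (by simpa using hk)⟩
  rw [toLin'_apply]
  refine scalarDiagConstOffDiag_mulVec_of_blockSum_eq_zero q t _ fun b' => ?_
  by_cases hb : b' = b <;> simp [Pi.single_apply, hb]

theorem scalarDiagConstOffDiag_hasEigenvalue_sub [Nontrivial ι] [Nonempty κ] :
    HasEigenvalue (toLin' (scalarDiagConstOffDiag (ι := ι) (κ := κ) q t))
      (q - t * Fintype.card κ) := by
  obtain ⟨b₀, b₁, hb⟩ := exists_pair_ne ι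
  let k : κ := Classical.arbitrary κ
  let w : ι → R := Pi.single b₀ 1 - Pi.single b₁ 1
  refine hasEigenvalue_of_hasEigenvector (x := fun i : ι × κ => w i.1)
    ⟨mem_eigenspace_iff.2 ?_, fun h => Pi.single_sub_single_ne_zero (R := R) hb ?_⟩
  · rw [toLin'_apply]
    exact scalarDiagConstOffDiag_mulVec_comp_fst q t w (by simp [w])
  · ext b
    exact congrFun h (b, k)

end CommRing

section Field

variable {K ι κ : Type*} [Field K] [Fintype ι] [Fintype κ] [DecidableEq ι] [DecidableEq κ]
  {q t μ : K}

/-- Away from `q` and `q - t |κ|`, the eigenvalue equation forces an eigenvector to be constant,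
first inside each block and then across blocks. -/
theorem scalarDiagConstOffDiag_eigenvector_const {v : ι × κ → K}
    (hv : scalarDiagConstOffDiag q t *ᵥ v = μ • v) (hμq : μ ≠ q)
    (hμ : μ ≠ q - t * Fintype.card κ) (i j : ι × κ) : v i = v j := by
  have heq : ∀ i : ι × κ, (μ - q) * v i = t * (∑ j, v j - ∑ k, v (i.1, k)) := fun i => by
    have := congrFun hv i
    rw [scalarDiagConstOffDiag_mulVec_apply, Pi.smul_apply, smul_eq_mul] at this
    linear_combination -this
  have hblock : ∀ b k k', v (b, k) = v (b, k') := fun b k k' =>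
    mul_left_cancel₀ (sub_ne_zero.2 hμq) ((heq (b, k)).trans (heq (b, k')).symm)
  have heq' : ∀ i : ι × κ, (μ - (q - t * Fintype.card κ)) * v i = t * ∑ j, v j := by
    intro i
    have hsum : ∑ k, v (i.1, k) = Fintype.card κ * v i := by
      rw [sum_congr rfl fun k _ => hblock i.1 k i.2, sum_const, card_univ, nsmul_eq_mul]
    linear_combination heq i - t * hsum
  exact mul_left_cancel₀ (sub_ne_zero.2 hμ) ((heq' i).trans (heq' j).symm)

theorem scalarDiagConstOffDiag_eigenvalue_eq
    (h : HasEigenvalue (toLin' (scalarDiagConstOffDiag (ι := ι) (κ := κ) q t)) μ) :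
    μ = q ∨ μ = q - t * Fintype.card κ ∨
      μ = q + t * ((Fintype.card ι - 1) * Fintype.card κ) := by
  by_contra! hμ
  obtain ⟨hμq, hμ, hμtop⟩ := hμ
  obtain ⟨v, hv, hv0⟩ := h.exists_hasEigenvector
  rw [mem_eigenspace_iff, toLin'_apply] at hv
  obtain ⟨i, hi⟩ := Function.ne_iff.1 hv0
  have hconst : v = fun _ => v i := funext fun j =>
    scalarDiagConstOffDiag_eigenvector_const hv hμq hμ j i
  rw [hconst, scalarDiagConstOffDiag_mulVec_const] at hv
  have := congrFun hv i
  simp only [Pi.smul_apply, smul_eq_mul] at this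
  exact hμtop (mul_right_cancel₀ hi this).symm

theorem finrank_eigenspace_scalarDiagConstOffDiag [Nonempty ι] [Nonempty κ]
    (hq : q + t * ((Fintype.card ι - 1) * Fintype.card κ) ≠ q)
    (h : q + t * ((Fintype.card ι - 1) * Fintype.card κ) ≠ q - t * Fintype.card κ) :
    finrank K (eigenspace (toLin' (scalarDiagConstOffDiag (ι := ι) (κ := κ) q t))
      (q + t * ((Fintype.card ι - 1) * Fintype.card κ))) = 1 := by
  have hspan : eigenspace (toLin' (scalarDiagConstOffDiag (ι := ι) (κ := κ) q t))
      (q + t * ((Fintype.card ι - 1) * Fintype.card κ)) = K ∙ fun _ => 1 := by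
    apply le_antisymm
    · intro v hv
      rw [mem_eigenspace_iff, toLin'_apply] at hv
      let i : ι × κ := Classical.arbitrary _
      refine Submodule.mem_span_singleton.2 ⟨v i, funext fun j => ?_⟩
      simpa using scalarDiagConstOffDiag_eigenvector_const hv hq h i j
    · rw [Submodule.span_le, Set.singleton_subset_iff, SetLike.mem_coe,
        mem_eigenspace_iff, toLin'_apply]
      exact scalarDiagConstOffDiag_mulVec_const q t 1
  rw [hspan]
  exact finrank_span_singleton (Function.ne_iff.2 ⟨Classical.arbitrary _, one_ne_zero⟩)

end Field

theorem statement_10_general (q t m : ℕ) (ht : 1 ≤ t) (hm : 1 ≤ m) (htm : t * m + 1 = q)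
    (A : Matrix (Fin (q + 1) × Fin m) (Fin (q + 1) × Fin m) ℝ)
    (hA2 : ∀ i j, (A * A) i j =
      if i.1 = j.1 then (if i = j then (q : ℝ) else 0) else (t : ℝ)) :
    Module.finrank ℝ ↥(Module.End.eigenspace (Matrix.toLin' (A * A)) ((q : ℝ) ^ 2)) = 1 ∧
    Module.End.HasEigenvalue (Matrix.toLin' (A * A)) 1 ∧
    (2 ≤ m → Module.End.HasEigenvalue (Matrix.toLin' (A * A)) (q : ℝ)) ∧
    ∀ μ : ℝ, Module.End.HasEigenvalue (Matrix.toLin' (A * A)) μ →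
      μ = (q : ℝ) ^ 2 ∨ μ = q ∨ μ = 1 := by
  have hq : 2 ≤ q := by nlinarith
  have hqR : (2 : ℝ) ≤ q := by exact_mod_cast hq
  have htm' : (t : ℝ) * m = q - 1 := by rw [← htm]; push_cast; ring
  have hlow : (q : ℝ) - t * Fintype.card (Fin m) = 1 := by rw [Fintype.card_fin, htm']; ring
  have htop :
      (q : ℝ) + t * ((Fintype.card (Fin (q + 1)) - 1) * Fintype.card (Fin m)) = q ^ 2 := by
    rw [Fintype.card_fin, Fintype.card_fin]
    push_cast
    linear_combination q * htm'
  have : Nonempty (Fin m) := Fin.pos_iff_nonempty.1 hm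
  have : Nontrivial (Fin (q + 1)) := Fin.nontrivial_iff_two_le.2 (by omega)
  rw [show A * A = scalarDiagConstOffDiag (q : ℝ) t from Matrix.ext hA2]
  refine ⟨?_, hlow ▸ scalarDiagConstOffDiag_hasEigenvalue_sub _ _, fun h2 => ?_,
    fun μ hμ => ?_⟩
  · rw [← htop]
    exact finrank_eigenspace_scalarDiagConstOffDiag (by rw [htop]; nlinarith)
      (by rw [htop, hlow]; nlinarith)
  · have : Nontrivial (Fin m) := Fin.nontrivial_iff_two_le.2 h2
    exact scalarDiagConstOffDiag_hasEigenvalue _ _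
  · obtain h | h | h := scalarDiagConstOffDiag_eigenvalue_eq hμ
    · exact Or.inr (Or.inl h)
    · exact Or.inr (Or.inr (h.trans hlow))
    · exact Or.inl (h.trans htop)

/-- Let `A` be a symmetric `N×N` real matrix, `N = (q+1)m`, partitioned into blocks of size
`m×m`, such that `A²` has blocks `qI` on the diagonal and the all-`t` matrix off the diagonal,
with `t·m = q−1`.  Then the eigenvalues of `A²` are `q²` (with multiplicity 1), `q`, and `1`. -/
theorem statement_10 (q t m : ℕ) (ht : 1 ≤ t) (hm : 1 ≤ m) (htm : t * m + 1 = q)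
    (A : Matrix (Fin (q + 1) × Fin m) (Fin (q + 1) × Fin m) ℝ)
    (hsym : A.IsSymm)
    (hA2 : ∀ i j, (A * A) i j =
      if i.1 = j.1 then (if i = j then (q : ℝ) else 0) else (t : ℝ)) :
    Module.finrank ℝ ↥(Module.End.eigenspace (Matrix.toLin' (A * A)) ((q : ℝ) ^ 2)) = 1 ∧
    Module.End.HasEigenvalue (Matrix.toLin' (A * A)) 1 ∧
    (2 ≤ m → Module.End.HasEigenvalue (Matrix.toLin' (A * A)) (q : ℝ)) ∧
    ∀ μ : ℝ, Module.End.HasEigenvalue (Matrix.toLin' (A * A)) μ →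
      μ = (q : ℝ) ^ 2 ∨ μ = q ∨ μ = 1 :=
  statement_10_general q t m ht hm htm A hA2
end
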